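/- arXiv:1702.01126 — 2 statements merged into one kernel-verified Lean document; each statement's English description precedes it below -/
import Mathlib

section
/- The maximal number of cyclic triads in a tournament on n vertices is (n^3 - n)/24 if n is odd and (n^3 - 4n)/24 if n is even. -/
def IsTournament {V : Type*} (r : V → V → Prop) : Prop :=
  (∀ v : V, ¬ r v v) ∧ ∀ u v : V, u ≠ v → (r u v ↔ ¬ r v u)

def CyclicTriad {V : Type*} (r : V → V → Prop) (t : Finset V) : Prop :=
  t.card = 3 ∧ ∃ a ∈ t, ∃ b ∈ t, ∃ c ∈ t,
    a ≠ b ∧ b ≠ c ∧ a ≠ c ∧ r a b ∧ r b c ∧ r c a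

noncomputable def cyclicTriadCount {V : Type*} (r : V → V → Prop) : ℕ :=
  {t : Finset V | CyclicTriad r t}.ncard

/-!
A 3-set of vertices fails to be cyclic exactly when one of its vertices beats the other two, and
that vertex is unique. Counting the non-cyclic 3-sets by this vertex gives
`c + ∑ v, (d v).choose 2 = n.choose 3`, where `d v` is the out-degree of `v`; counting 2-sets in
the same way gives `∑ v, d v = n.choose 2`. Together they yield
`24 c = n ^ 3 - n - 3 ∑ v, (2 d v - (n - 1)) ^ 2`. Each square is nonnegative, and at least `1`
when `n` is even, since `2 d v - (n - 1)` is then odd. Equality holds for the rotational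
tournament, whose out-degrees all lie in `{⌊n / 2⌋, ⌊(n - 1) / 2⌋}`.
-/

open Finset

theorem cast_choose_three (K : Type*) [Field K] [CharZero K] (n : ℕ) :
    (n.choose 3 : K) = n * (n - 1) * (n - 2) / 6 := by
  induction n with
  | zero => simp
  | succ n ih =>
    rw [Nat.choose_succ_succ', Nat.cast_add, ih, Nat.cast_choose_two]
    push_cast
    ring

theorem le_sq_two_mul_sub (d n : ℕ) : (if Odd n then 0 else 1 : ℤ) ≤ (2 * d - (n - 1 : ℤ)) ^ 2 := by
  split_ifs with hn
  · positivity
  · rw [one_le_sq_iff_one_le_abs]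
    exact Int.one_le_abs fun h => hn ⟨d, by omega⟩

theorem sq_two_mul_sub_of_abs_le {d n : ℕ} (h : |2 * d - (n - 1 : ℤ)| ≤ 1) :
    (2 * d - (n - 1 : ℤ)) ^ 2 = if Odd n then 0 else 1 := by
  obtain ⟨hl, hu⟩ := abs_le.1 h
  split_ifs with hn
  · obtain ⟨m, rfl⟩ := hn
    rw [show 2 * d - ((2 * m + 1 : ℕ) - 1 : ℤ) = 0 by omega, zero_pow two_ne_zero]
  · obtain ⟨m, rfl⟩ := Nat.not_odd_iff_even.1 hn
    rcases (by omega : 2 * d - ((m + m : ℕ) - 1 : ℤ) = 1 ∨ 2 * d - ((m + m : ℕ) - 1 : ℤ) = -1)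
      with h | h <;> rw [h] <;> norm_num

theorem natCast_ite_pow_three_sub (n : ℕ) :
    ((if Odd n then n ^ 3 - n else n ^ 3 - 4 * n : ℕ) : ℤ)
      = if Odd n then (n : ℤ) ^ 3 - n else (n : ℤ) ^ 3 - 4 * n := by
  split_ifs with hn
  · rw [Nat.cast_sub (Nat.le_self_pow three_ne_zero n)]
    push_cast
    rfl
  · obtain ⟨m, rfl⟩ := Nat.not_odd_iff_even.1 hn
    rw [Nat.cast_sub (by rcases m with _ | m <;> ring_nf <;> nlinarith)]
    push_cast
    rfl

section Sources

variable {V : Type*} (r : V → V → Prop)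

def outNeighbors [Fintype V] [DecidableRel r] (v : V) : Finset V := {w | r v w}

def outDegree [Fintype V] [DecidableRel r] (v : V) : ℕ := #(outNeighbors r v)

def IsSourceOf (t : Finset V) (v : V) : Prop := v ∈ t ∧ ∀ w ∈ t, w ≠ v → r v w

instance [DecidableEq V] [DecidableRel r] (t : Finset V) (v : V) : Decidable (IsSourceOf r t v) :=
  inferInstanceAs (Decidable (_ ∧ _))

variable {r}

theorem IsSourceOf.unique (hr : ∀ u v, r u v → ¬ r v u) {t : Finset V} {v w : V}
    (hv : IsSourceOf r t v) (hw : IsSourceOf r t w) : v = w := by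
  by_contra hne
  exact hr v w (hv.2 w hw.1 (Ne.symm hne)) (hw.2 v hv.1 hne)

theorem isSourceOf_insert [Fintype V] [DecidableEq V] [DecidableRel r] {v : V} {s : Finset V}
    (hs : s ⊆ outNeighbors r v) : IsSourceOf r (insert v s) v :=
  ⟨mem_insert_self v s, fun _ hw hwv => (mem_filter.1 (hs ((mem_insert.1 hw).resolve_left hwv))).2⟩

theorem erase_subset_outNeighbors [Fintype V] [DecidableEq V] [DecidableRel r] {v : V}
    {t : Finset V} (h : IsSourceOf r t v) : t.erase v ⊆ outNeighbors r v := fun w hw =>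
  mem_filter.2 ⟨mem_univ w, h.2 w (mem_of_mem_erase hw) (ne_of_mem_erase hw)⟩

theorem card_filter_exists_isSourceOf [Fintype V] [DecidableEq V] [DecidableRel r]
    (hr : ∀ u v, r u v → ¬ r v u) (k : ℕ) :
    #{t ∈ powersetCard (k + 1) univ | ∃ v, IsSourceOf r t v} = ∑ v, (outDegree r v).choose k := by
  simp_rw [outDegree, ← card_powersetCard, ← card_sigma]
  have hv : ∀ v, v ∉ outNeighbors r v := fun v h => hr v v (mem_filter.1 h).2 (mem_filter.1 h).2
  symm
  refine card_bij (fun p _ => insert p.1 p.2) ?_ ?_ ?_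
  · rintro ⟨v, s⟩ hs
    obtain ⟨hsub, hcard⟩ := mem_powersetCard.1 (mem_sigma.1 hs).2
    refine mem_filter.2 ⟨mem_powersetCard.2 ⟨subset_univ _, ?_⟩, v, isSourceOf_insert hsub⟩
    rw [card_insert_of_notMem (fun h => hv v (hsub h)), hcard]
  · rintro ⟨v, s⟩ hs ⟨v', s'⟩ hs' heq
    have hsub : s ⊆ outNeighbors r v := (mem_powersetCard.1 (mem_sigma.1 hs).2).1
    have hsub' : s' ⊆ outNeighbors r v' := (mem_powersetCard.1 (mem_sigma.1 hs').2).1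
    dsimp only at heq
    obtain rfl : v = v' := (isSourceOf_insert hsub).unique hr (heq ▸ isSourceOf_insert hsub')
    rw [← erase_insert (fun h => hv v (hsub h)), heq, erase_insert (fun h => hv v (hsub' h))]
  · intro t ht
    obtain ⟨ht, v, hv⟩ := mem_filter.1 ht
    refine ⟨⟨v, t.erase v⟩, mem_sigma.2 ⟨mem_univ v, mem_powersetCard.2
      ⟨erase_subset_outNeighbors hv, ?_⟩⟩, insert_erase hv.1⟩
    rw [card_erase_of_mem hv.1, (mem_powersetCard.1 ht).2, Nat.add_sub_cancel]

end Sources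

namespace IsTournament

variable {V : Type*} {r : V → V → Prop}

theorem asymm (hT : IsTournament r) (u v : V) (huv : r u v) : ¬ r v u := by
  rcases eq_or_ne u v with rfl | hne
  · exact absurd huv (hT.1 u)
  · exact (hT.2 u v hne).1 huv

theorem total (hT : IsTournament r) {u v : V} (hne : u ≠ v) : r u v ∨ r v u := by
  by_cases h : r u v
  · exact Or.inl h
  · exact Or.inr ((hT.2 v u hne.symm).2 h)

theorem exists_isSourceOf_of_card_eq_two [DecidableEq V] (hT : IsTournament r) {t : Finset V}
    (ht : #t = 2) : ∃ v, IsSourceOf r t v := by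
  obtain ⟨a, b, hab, rfl⟩ := card_eq_two.1 ht
  rcases hT.total hab with h | h
  · exact ⟨a, by simp [IsSourceOf, h]⟩
  · exact ⟨b, by simp [IsSourceOf, h]⟩

theorem cyclicTriad_iff_not_exists_isSourceOf [DecidableEq V] (hT : IsTournament r)
    {t : Finset V} (ht : #t = 3) : CyclicTriad r t ↔ ¬ ∃ v, IsSourceOf r t v := by
  constructor
  · rintro ⟨-, a, ha, b, hb, c, hc, hab, hbc, hac, h1, h2, h3⟩ ⟨v, hv, hsrc⟩
    have habc : t = {a, b, c} := (eq_of_subset_of_card_le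
      (insert_subset_iff.2 ⟨ha, insert_subset_iff.2 ⟨hb, singleton_subset_iff.2 hc⟩⟩)
      (ht.trans (card_eq_three.2 ⟨a, b, c, hab, hac, hbc, rfl⟩).symm).le).symm
    subst habc
    simp only [mem_insert, mem_singleton] at hv
    rcases hv with rfl | rfl | rfl
    · exact hT.asymm _ _ h3 (hsrc c (by simp) hac.symm)
    · exact hT.asymm _ _ h1 (hsrc a (by simp) hab)
    · exact hT.asymm _ _ h2 (hsrc b (by simp) hbc)
  · intro hno
    obtain ⟨a, b, c, hab, hac, hbc, rfl⟩ := card_eq_three.1 ht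
    refine ⟨ht, ?_⟩
    rcases hT.total hab with h1 | h1 <;> rcases hT.total hbc with h2 | h2 <;>
      rcases hT.total (Ne.symm hac) with h3 | h3
    · exact ⟨a, by simp, b, by simp, c, by simp, hab, hbc, hac, h1, h2, h3⟩
    rotate_right
    · exact ⟨a, by simp, c, by simp, b, by simp, hac, hbc.symm, hab, h3, h2, h1⟩
    all_goals exfalso
    all_goals first
      | (refine hno ⟨a, ?_⟩; simp [IsSourceOf, h1, h3]; done)
      | (refine hno ⟨b, ?_⟩; simp [IsSourceOf, h1, h2]; done)
      | (refine hno ⟨c, ?_⟩; simp [IsSourceOf, h2, h3])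

theorem sum_outDegree [Fintype V] [DecidableEq V] [DecidableRel r] (hT : IsTournament r) :
    ∑ v, outDegree r v = (Fintype.card V).choose 2 := by
  have h := card_filter_exists_isSourceOf hT.asymm 1
  simp only [Nat.choose_one_right] at h
  rw [← h, filter_true_of_mem fun t ht => hT.exists_isSourceOf_of_card_eq_two
    (mem_powersetCard.1 ht).2, card_powersetCard, card_univ]

theorem cyclicTriadCount_add_sum_choose_two [Fintype V] [DecidableEq V] [DecidableRel r]
    (hT : IsTournament r) :
    cyclicTriadCount r + ∑ v, (outDegree r v).choose 2 = (Fintype.card V).choose 3 := by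
  classical
  have hcyc : cyclicTriadCount r = #{t ∈ powersetCard 3 univ | CyclicTriad r t} := by
    rw [cyclicTriadCount, ← Set.ncard_coe_finset]
    congr
    ext t
    simpa using fun h : CyclicTriad r t => h.1
  rw [hcyc, ← card_filter_exists_isSourceOf hT.asymm 2, ← card_univ, ← card_powersetCard,
    ← card_filter_add_card_filter_not (s := powersetCard 3 univ) (CyclicTriad r)]
  congr 2
  refine filter_congr fun t ht => ?_
  rw [hT.cyclicTriad_iff_not_exists_isSourceOf (mem_powersetCard.1 ht).2, not_not]

theorem twentyFour_mul_cyclicTriadCount_eq [Fintype V] [DecidableEq V] [DecidableRel r]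
    (hT : IsTournament r) :
    24 * (cyclicTriadCount r : ℤ) = (Fintype.card V : ℤ) ^ 3 - Fintype.card V
      - 3 * ∑ v, (2 * (outDegree r v : ℤ) - (Fintype.card V - 1)) ^ 2 := by
  set n := Fintype.card V with hn
  have hcount : (cyclicTriadCount r : ℚ) + ∑ v, (outDegree r v : ℚ) * (outDegree r v - 1) / 2
      = n * (n - 1) * (n - 2) / 6 := by
    simpa [Nat.cast_choose_two, cast_choose_three] using
      congrArg (Nat.cast (R := ℚ)) hT.cyclicTriadCount_add_sum_choose_two
  have hdeg : ∑ v, (outDegree r v : ℚ) = n * (n - 1) / 2 := by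
    simpa [Nat.cast_choose_two] using congrArg (Nat.cast (R := ℚ)) hT.sum_outDegree
  have hsq : ∑ v, (2 * (outDegree r v : ℚ) - (n - 1)) ^ 2 = 8 * ∑ v, (outDegree r v : ℚ) *
      (outDegree r v - 1) / 2 - 4 * (n - 2) * ∑ v, (outDegree r v : ℚ) + n * (n - 1) ^ 2 := by
    calc _ = ∑ v, (8 * ((outDegree r v : ℚ) * (outDegree r v - 1) / 2)
            - 4 * (n - 2) * outDegree r v + (n - 1) ^ 2) := sum_congr rfl fun _ _ => by ring
      _ = _ := by
        rw [sum_add_distrib, sum_sub_distrib, ← mul_sum, ← mul_sum, sum_const, card_univ, ← hn,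
          nsmul_eq_mul]
  qify
  rw [hsq]
  linear_combination 24 * hcount - 12 * (n - 2) * hdeg

theorem twentyFour_mul_cyclicTriadCount_le [Fintype V] [DecidableEq V] [DecidableRel r]
    (hT : IsTournament r) :
    24 * (cyclicTriadCount r : ℤ) ≤ if Odd (Fintype.card V)
      then (Fintype.card V : ℤ) ^ 3 - Fintype.card V
      else (Fintype.card V : ℤ) ^ 3 - 4 * Fintype.card V := by
  set n := Fintype.card V with hn
  have hsum : (if Odd n then 0 else n : ℤ)
      ≤ ∑ v, (2 * (outDegree r v : ℤ) - (n - 1)) ^ 2 :=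
    calc (if Odd n then 0 else n : ℤ) = ∑ _v : V, (if Odd n then 0 else 1 : ℤ) := by
          split_ifs <;> simp [hn]
      _ ≤ _ := sum_le_sum fun v _ => le_sq_two_mul_sub (outDegree r v) n
  rw [hT.twentyFour_mul_cyclicTriadCount_eq]
  split_ifs at hsum ⊢ <;> linarith

theorem twentyFour_mul_cyclicTriadCount_eq_of_abs_le [Fintype V] [DecidableEq V]
    [DecidableRel r] (hT : IsTournament r)
    (h : ∀ v, |2 * (outDegree r v : ℤ) - (Fintype.card V - 1)| ≤ 1) :
    24 * (cyclicTriadCount r : ℤ) = if Odd (Fintype.card V)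
      then (Fintype.card V : ℤ) ^ 3 - Fintype.card V
      else (Fintype.card V : ℤ) ^ 3 - 4 * Fintype.card V := by
  rw [hT.twentyFour_mul_cyclicTriadCount_eq,
    sum_congr rfl fun v _ => sq_two_mul_sub_of_abs_le (h v)]
  split_ifs <;> simp only [sum_const, card_univ, nsmul_eq_mul] <;> ring

end IsTournament

/-- Vertex `i` beats the `⌊n / 2⌋` vertices following it cyclically; when `n` is even, the
antipodal pair is won by the smaller vertex. -/
def rotationalTournament (n : ℕ) (i j : Fin n) : Prop :=
  (i.val < j.val ∧ 2 * (j.val - i.val) ≤ n) ∨ (j.val < i.val ∧ n < 2 * (i.val - j.val))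

instance (n : ℕ) : DecidableRel (rotationalTournament n) := fun _ _ =>
  inferInstanceAs (Decidable (_ ∨ _))

theorem isTournament_rotationalTournament (n : ℕ) : IsTournament (rotationalTournament n) := by
  refine ⟨fun v => ?_, fun u v huv => ?_⟩
  · simp only [rotationalTournament]
    omega
  · have h : u.val ≠ v.val := Fin.val_ne_of_ne huv
    simp only [rotationalTournament]
    omega

theorem outDegree_rotationalTournament {n : ℕ} (i : Fin n) :
    outDegree (rotationalTournament n) i = if 2 * i.val < n then n / 2 else (n - 1) / 2 := by
  have hval : (outNeighbors (rotationalTournament n) i).map Fin.valEmbedding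
      = {k ∈ range n | (i.val < k ∧ 2 * (k - i.val) ≤ n) ∨ (k < i.val ∧ n < 2 * (i.val - k))} := by
    ext k
    simp only [outNeighbors, mem_map, mem_filter, mem_univ, true_and, Fin.valEmbedding_apply,
      mem_range]
    exact ⟨fun ⟨j, hj, hjk⟩ => hjk ▸ ⟨j.isLt, hj⟩, fun ⟨hk, h⟩ => ⟨⟨k, hk⟩, h, rfl⟩⟩
  rw [outDegree, ← card_map Fin.valEmbedding, hval, filter_or,
    card_union_of_disjoint (disjoint_filter.2 fun _ _ _ _ => by omega)]
  have hright : {k ∈ range n | i.val < k ∧ 2 * (k - i.val) ≤ n}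
      = Ioc i.val (min (i.val + n / 2) (n - 1)) := by
    ext k
    simp only [mem_filter, mem_range, mem_Ioc]
    omega
  have hleft : {k ∈ range n | k < i.val ∧ n < 2 * (i.val - k)} = range (i.val - n / 2) := by
    ext k
    simp only [mem_filter, mem_range]
    omega
  rw [hright, hleft, Nat.card_Ioc, card_range]
  have := i.isLt
  split_ifs <;> omega

theorem abs_two_mul_outDegree_rotationalTournament_sub_le {n : ℕ} (i : Fin n) :
    |2 * (outDegree (rotationalTournament n) i : ℤ) - (n - 1)| ≤ 1 := by
  rw [outDegree_rotationalTournament, abs_le]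
  split_ifs <;> omega

theorem kendall_babington_smith (n : ℕ) :
    IsGreatest
      {k : ℕ | ∃ T : Fin n → Fin n → Prop, IsTournament T ∧ cyclicTriadCount T = k}
      (if Odd n then (n ^ 3 - n) / 24 else (n ^ 3 - 4 * n) / 24) := by
  classical
  rw [← apply_ite (· / 24)]
  have hcast := natCast_ite_pow_three_sub n
  refine ⟨⟨rotationalTournament n, isTournament_rotationalTournament n, ?_⟩, ?_⟩
  · have h := (isTournament_rotationalTournament n).twentyFour_mul_cyclicTriadCount_eq_of_abs_le
      (by simpa using abs_two_mul_outDegree_rotationalTournament_sub_le)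
    rw [Fintype.card_fin, ← hcast] at h
    exact (Nat.div_eq_of_eq_mul_right (by norm_num) (by exact_mod_cast h.symm)).symm
  · rintro _ ⟨T, hT, rfl⟩
    have h := hT.twentyFour_mul_cyclicTriadCount_le
    rw [Fintype.card_fin, ← hcast] at h
    rw [Nat.le_div_iff_mul_le (by norm_num), mul_comm (cyclicTriadCount T)]
    exact_mod_cast h
end

section
/- Let nonnegative integers d_1, ..., d_n satisfy d_1 + ... + d_n = m. Then the sum over i of C(d_i, 2) is at least C(n,m) := (1/2) * floor(m/n) * (2m - n*floor(m/n) - n). -/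
lemma int_mul_pred_nonneg (x : ℤ) : 0 ≤ x * (x - 1) := by
  rcases le_or_gt x 0 with h | h
  · have hx : x * (x - 1) = (-x) * (1 - x) := by ring
    rw [hx]; exact mul_nonneg (by linarith) (by linarith)
  · exact mul_nonneg (by linarith) (by linarith)

lemma two_choose_two (d : ℕ) : 2 * ((d.choose 2 : ℤ)) = (d : ℤ) * ((d : ℤ) - 1) := by
  cases d with
  | zero => simp
  | succ k =>
    have h2 : 2 ∣ (k + 1) * k := by
      rcases Nat.even_or_odd k with h | h
      · exact Dvd.dvd.mul_left h.two_dvd _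
      · exact Dvd.dvd.mul_right h.add_one.two_dvd _
    have hn : 2 * (k + 1).choose 2 = (k + 1) * k := by
      rw [Nat.choose_two_right]
      simpa using Nat.mul_div_cancel' h2
    have := congrArg (fun x : ℕ => (x : ℤ)) hn
    push_cast at this
    push_cast
    linarith

lemma pointwise (q d : ℕ) : (q : ℤ) * (2 * d - q - 1) ≤ 2 * ((d.choose 2 : ℤ)) := by
  rw [two_choose_two]
  have := int_mul_pred_nonneg ((d : ℤ) - q)
  nlinarith [this]

theorem sum_choose_two_lower_bound (n m : ℕ) (d : Fin n → ℕ)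
    (hsum : ∑ i, d i = m) :
    (((m / n : ℕ) : ℤ) * (2 * (m : ℤ) - (n : ℤ) * ((m / n : ℕ) : ℤ) - (n : ℤ)))
      ≤ 2 * ∑ i, ((d i).choose 2 : ℤ) := by
  set q : ℕ := m / n with hq
  have key : ∑ i, (q : ℤ) * (2 * (d i) - q - 1) ≤ ∑ i, 2 * ((d i).choose 2 : ℤ) :=
    Finset.sum_le_sum fun i _ => pointwise q (d i)
  have hms : ((m : ℤ)) = ∑ i, ((d i : ℤ)) := by
    rw [← hsum]; push_cast; ring
  calc (q : ℤ) * (2 * m - n * q - n)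
      = ∑ i : Fin n, (q : ℤ) * (2 * (d i) - q - 1) := by
        rw [hms, Finset.mul_sum]
        simp [Finset.mul_sum, Finset.sum_sub_distrib, Finset.card_univ, mul_sub, mul_comm]
        ring
    _ ≤ ∑ i, 2 * ((d i).choose 2 : ℤ) := key
    _ = 2 * ∑ i, ((d i).choose 2 : ℤ) := by rw [Finset.mul_sum]
end
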